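/- Let A be a parameter matrix solving the inverse problem for the linear-in-parameters system x' = A f(x) with data x_j = φ(j; A), j = 0, 1, 2, whose trajectory is periodic with period T. Then for γ = (m̃ − m)T + 1 with any integer m̃ (and m determined by the original solution, where 1 = mT + τ), the rescaled matrix à = γA also solves the inverse problem: the trajectory of x' = Ã f(x) through x_0 satisfies φ̃(j) = x_j for j = 0, 1, 2. More simply: if the trajectory of x' = A f(x) through x_0 is T-periodic and passes through x_1 at time 1 and x_2 at time 2, then for γ = kT + 1 with any integer k such that γ ≠ 0, the trajectory of x' = (kT+1)A f(x) through x_0 passes through x_1 at time 1 and x_2 at time 2. -/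

import Mathlib

/-- if the trajectory of x' = A f(x) through x₀ is T-periodic and
passes through x₁ at time 1 and x₂ at time 2, then for γ = kT + 1 ≠ 0 (k ∈ ℤ),
the trajectory of x' = (γA) f(x) through x₀ also passes through x₁, x₂ at
times 1, 2. -/
theorem stmt6 {n m : ℕ} (A : Matrix (Fin n) (Fin m) ℝ)
    (f : (Fin n → ℝ) → Fin m → ℝ)
    (φ : ℝ → Fin n → ℝ)
    (hφ : ∀ t : ℝ, HasDerivAt φ (A.mulVec (f (φ t))) t)
    (T : ℝ) (hT : 0 < T) (hper : Function.Periodic φ T)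
    (x0 x1 x2 : Fin n → ℝ)
    (h0 : φ 0 = x0) (h1 : φ 1 = x1) (h2 : φ 2 = x2)
    (k : ℤ) (γ : ℝ) (hγ : γ = (k : ℝ) * T + 1) (hne : γ ≠ 0) :
    (∀ t : ℝ, HasDerivAt (fun t => φ (γ * t))
        ((γ • A).mulVec (f (φ (γ * t)))) t)
    ∧ φ (γ * 0) = x0 ∧ φ (γ * 1) = x1 ∧ φ (γ * 2) = x2 := by
  refine ⟨?_, by simpa using h0, ?_, ?_⟩
  · intro t
    have hmul : HasDerivAt (fun s : ℝ => γ * s) γ t := by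
      simpa using (hasDerivAt_id t).const_mul γ
    have h := (hφ (γ * t)).scomp t hmul
    convert h using 1
    iterate 4 rfl
    ext i
    simp only [Matrix.mulVec, Matrix.smul_apply, dotProduct, Pi.smul_apply,
      smul_eq_mul, Matrix.smul_apply]
    rw [Finset.mul_sum]
    exact Finset.sum_congr rfl fun j _ => by ring
  · have e : γ * 1 = 1 + (k : ℝ) * T := by rw [hγ]; ring
    rw [e, (hper.int_mul k) 1, h1]
  · have e : γ * 2 = 2 + ((2 * k : ℤ) : ℝ) * T := by push_cast; rw [hγ]; ring
    rw [e, (hper.int_mul (2 * k)) 2, h2]
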